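/- arXiv:1510.02695 — 4 statements merged into one kernel-verified Lean document; each statement's English description precedes it below -/
import Mathlib

section
/- For every μ ∈ (0,1), in each of the three open intervals (−∞, −μ), (−μ, 1−μ), and (1−μ, ∞) there exists exactly one real number x such that (x, 0) is a critical point of the effective potential U (i.e., U_x(x, 0) = 0; note U_y(x, 0) = 0 automatically). These are the three collinear Lagrange points L₁, L₂, L₃. -/
/-!
On the axis, `U_x(a, 0) = a - (1 - μ) g(a + μ) - μ g(a - 1 + μ)` with `g t = t / |t|³`, and `g` is
antitone on each of the half-lines `t < 0` and `t > 0`. Hence `U_x(·, 0)` is strictly increasing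
on each of the three intervals cut out by the primaries, so it has at most one zero there, and
it has one by the intermediate value theorem once a negative and a positive value are exhibited.
Exchanging the primaries (`μ ↦ 1 - μ`, `a ↦ -a`) turns `U_x` into `-U_x`; this carries the
outer interval on the left to the one on the right and supplies, on the middle interval, the
positive value from the negative one.
-/

open Set

noncomputable def signedInvSq (t : ℝ) : ℝ := t / |t| ^ 3

lemma signedInvSq_neg (t : ℝ) : signedInvSq (-t) = -signedInvSq t := by
  simp only [signedInvSq, abs_neg, neg_div]

lemma signedInvSq_of_pos {t : ℝ} (ht : 0 < t) : signedInvSq t = (t ^ 2)⁻¹ := by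
  rw [signedInvSq, abs_of_pos ht]
  field_simp

lemma signedInvSq_of_neg {t : ℝ} (ht : t < 0) : signedInvSq t = -(t ^ 2)⁻¹ := by
  rw [← neg_neg (signedInvSq t), ← signedInvSq_neg, signedInvSq_of_pos (neg_pos.mpr ht), neg_sq]

lemma antitoneOn_signedInvSq_Ioi : AntitoneOn signedInvSq (Ioi 0) := by
  intro a (ha : 0 < a) b (hb : 0 < b) hab
  rw [signedInvSq_of_pos ha, signedInvSq_of_pos hb]
  gcongr

lemma antitoneOn_signedInvSq_Iio : AntitoneOn signedInvSq (Iio 0) := by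
  intro a (ha : a < 0) b (hb : b < 0) hab
  have := antitoneOn_signedInvSq_Ioi (neg_pos.mpr hb) (neg_pos.mpr ha) (neg_le_neg hab)
  rw [signedInvSq_neg, signedInvSq_neg] at this
  linarith

lemma continuousAt_signedInvSq {t : ℝ} (ht : t ≠ 0) : ContinuousAt signedInvSq t :=
  continuousAt_id.div (continuous_abs.pow 3).continuousAt (by positivity)

/-- `U_x(a, 0)`, with `r₁ = |a + μ|` and `r₂ = |a - 1 + μ|`. -/
noncomputable def collinearUx (μ a : ℝ) : ℝ :=
  a - (1 - μ) * signedInvSq (a + μ) - μ * signedInvSq (a - 1 + μ)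

lemma collinearUx_one_sub_neg (μ a : ℝ) : collinearUx (1 - μ) (-a) = -collinearUx μ a := by
  have h₁ : -a + (1 - μ) = -(a - 1 + μ) := by ring
  have h₂ : -a - 1 + (1 - μ) = -(a + μ) := by ring
  rw [collinearUx, collinearUx, h₁, h₂, signedInvSq_neg, signedInvSq_neg]
  ring

lemma continuousOn_collinearUx {μ : ℝ} {S : Set ℝ} (h₁ : ∀ a ∈ S, a + μ ≠ 0)
    (h₂ : ∀ a ∈ S, a - 1 + μ ≠ 0) : ContinuousOn (collinearUx μ) S := by
  intro a ha
  have := continuousAt_signedInvSq (h₁ a ha)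
  have := continuousAt_signedInvSq (h₂ a ha)
  unfold collinearUx
  fun_prop

lemma strictMonoOn_collinearUx {μ : ℝ} (hμ : μ ∈ Icc 0 1) {S H₁ H₂ : Set ℝ}
    (h₁ : AntitoneOn signedInvSq H₁) (h₂ : AntitoneOn signedInvSq H₂)
    (hS₁ : MapsTo (· + μ) S H₁) (hS₂ : MapsTo (· - 1 + μ) S H₂) :
    StrictMonoOn (collinearUx μ) S := by
  intro a ha b hb hab
  have e₁ := h₁ (hS₁ ha) (hS₁ hb) (by simp only; linarith)
  have e₂ := h₂ (hS₂ ha) (hS₂ hb) (by simp only; linarith)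
  simp only [collinearUx]
  nlinarith [mul_le_mul_of_nonneg_left e₁ (sub_nonneg.mpr hμ.2),
    mul_le_mul_of_nonneg_left e₂ hμ.1]

lemma existsUnique_eq_zero_of_strictMonoOn {f : ℝ → ℝ} {S : Set ℝ} (hS : IsPreconnected S)
    (hmono : StrictMonoOn f S) (hcont : ContinuousOn f S) {p q : ℝ} (hp : p ∈ S) (hq : q ∈ S)
    (hfp : f p < 0) (hfq : 0 < f q) : ∃! a, a ∈ S ∧ f a = 0 := by
  obtain ⟨c, hc, hfc⟩ := hS.intermediate_value hp hq hcont ⟨hfp.le, hfq.le⟩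
  exact ⟨c, ⟨hc, hfc⟩, fun y hy => hmono.injOn hy.1 hc (hy.2.trans hfc.symm)⟩

lemma collinearUx_neg_two_neg {μ : ℝ} (hμ : μ ∈ Ioo 0 1) : collinearUx μ (-2) < 0 := by
  have hle : ∀ t ≤ -1, -1 ≤ signedInvSq t := fun t ht => by
    simpa [signedInvSq] using antitoneOn_signedInvSq_Iio (by simp only [mem_Iio]; linarith)
      (by norm_num : (-1 : ℝ) ∈ Iio 0) ht
  have e₁ := hle (-2 + μ) (by linarith [hμ.2])
  have e₂ := hle (-2 - 1 + μ) (by linarith [hμ.2])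
  simp only [collinearUx]
  nlinarith [hμ.1, hμ.2]

/- The points `-(1 + μ) / 2` and `(1 - 3μ) / 2` lie at distance `(1 - μ) / 2` from the primary
at `-μ`, whose pull `4 / (1 - μ) ≥ 4` there dominates the other terms. -/
lemma collinearUx_neg_one_add_div_two_pos {μ : ℝ} (hμ : μ ∈ Ioo 0 1) :
    0 < collinearUx μ (-(1 + μ) / 2) := by
  obtain ⟨hμ0, hμ1⟩ := hμ
  have e₁ : signedInvSq (-(1 + μ) / 2 + μ) = -4 / (1 - μ) ^ 2 := by
    rw [show -(1 + μ) / 2 + μ = -((1 - μ) / 2) by ring, signedInvSq_neg,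
      signedInvSq_of_pos (by linarith), div_pow, inv_div]
    ring
  have e₂ : signedInvSq (-(1 + μ) / 2 - 1 + μ) < 0 :=
    div_neg_of_neg_of_pos (by linarith) (pow_pos (abs_pos.mpr (by linarith)) 3)
  have e₃ : 4 ≤ 4 / (1 - μ) := by
    rw [le_div_iff₀ (by linarith)]; linarith
  rw [collinearUx, e₁]
  have : (1 - μ) * (-4 / (1 - μ) ^ 2) = -(4 / (1 - μ)) := by field_simp
  nlinarith

lemma collinearUx_one_sub_three_mul_div_two_neg {μ : ℝ} (hμ : μ ∈ Ioo 0 1) :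
    collinearUx μ ((1 - 3 * μ) / 2) < 0 := by
  obtain ⟨hμ0, hμ1⟩ := hμ
  have e₁ : signedInvSq ((1 - 3 * μ) / 2 + μ) = 4 / (1 - μ) ^ 2 := by
    rw [show (1 - 3 * μ) / 2 + μ = (1 - μ) / 2 by ring, signedInvSq_of_pos (by linarith),
      div_pow, inv_div]
    ring
  have e₂ : signedInvSq ((1 - 3 * μ) / 2 - 1 + μ) = -4 / (1 + μ) ^ 2 := by
    rw [show (1 - 3 * μ) / 2 - 1 + μ = -((1 + μ) / 2) by ring, signedInvSq_neg,
      signedInvSq_of_pos (by linarith), div_pow, inv_div]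
    ring
  have e₃ : 4 ≤ 4 / (1 - μ) := by
    rw [le_div_iff₀ (by linarith)]; linarith
  have e₄ : 4 * μ / (1 + μ) ^ 2 ≤ 1 := by
    rw [div_le_one (by positivity)]; nlinarith [sq_nonneg (1 - μ)]
  rw [collinearUx, e₁, e₂]
  have : (1 - μ) * (4 / (1 - μ) ^ 2) = 4 / (1 - μ) := by field_simp
  have : μ * (-4 / (1 + μ) ^ 2) = -(4 * μ / (1 + μ) ^ 2) := by ring
  nlinarith

lemma one_sub_mem_Ioo_zero_one {μ : ℝ} (hμ : μ ∈ Ioo 0 1) : 1 - μ ∈ Ioo 0 1 :=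
  ⟨by linarith [hμ.2], by linarith [hμ.1]⟩

lemma existsUnique_collinearUx_eq_zero_Iio {μ : ℝ} (hμ : μ ∈ Ioo 0 1) :
    ∃! a, a ∈ Iio (-μ) ∧ collinearUx μ a = 0 := by
  have hS₁ : MapsTo (· + μ) (Iio (-μ)) (Iio 0) := fun a (ha : a < -μ) =>
    show a + μ < 0 by linarith
  have hS₂ : MapsTo (· - 1 + μ) (Iio (-μ)) (Iio 0) := fun a (ha : a < -μ) =>
    show a - 1 + μ < 0 by linarith
  refine existsUnique_eq_zero_of_strictMonoOn isPreconnected_Iio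
    (strictMonoOn_collinearUx (Ioo_subset_Icc_self hμ) antitoneOn_signedInvSq_Iio
      antitoneOn_signedInvSq_Iio hS₁ hS₂)
    (continuousOn_collinearUx (fun a ha => (hS₁ ha).ne) (fun a ha => (hS₂ ha).ne))
    ?_ ?_ (collinearUx_neg_two_neg hμ) (collinearUx_neg_one_add_div_two_pos hμ)
  · show -2 < -μ
    linarith [hμ.2]
  · show -(1 + μ) / 2 < -μ
    linarith [hμ.2]

lemma existsUnique_collinearUx_eq_zero_Ioo {μ : ℝ} (hμ : μ ∈ Ioo 0 1) :
    ∃! a, a ∈ Ioo (-μ) (1 - μ) ∧ collinearUx μ a = 0 := by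
  have hS₁ : MapsTo (· + μ) (Ioo (-μ) (1 - μ)) (Ioi 0) := fun a ha =>
    show 0 < a + μ by linarith [ha.1]
  have hS₂ : MapsTo (· - 1 + μ) (Ioo (-μ) (1 - μ)) (Iio 0) := fun a ha =>
    show a - 1 + μ < 0 by linarith [ha.2]
  have hq := collinearUx_one_sub_neg (1 - μ) ((1 - 3 * (1 - μ)) / 2)
  rw [sub_sub_cancel] at hq
  refine existsUnique_eq_zero_of_strictMonoOn isPreconnected_Ioo
    (strictMonoOn_collinearUx (Ioo_subset_Icc_self hμ) antitoneOn_signedInvSq_Ioi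
      antitoneOn_signedInvSq_Iio hS₁ hS₂)
    (continuousOn_collinearUx (fun a ha => (hS₁ ha).ne') (fun a ha => (hS₂ ha).ne))
    (q := -((1 - 3 * (1 - μ)) / 2)) ?_ ?_ (collinearUx_one_sub_three_mul_div_two_neg hμ) ?_
  · constructor <;> linarith [hμ.1, hμ.2]
  · constructor <;> linarith [hμ.1, hμ.2]
  · rw [hq, neg_pos]
    exact collinearUx_one_sub_three_mul_div_two_neg (one_sub_mem_Ioo_zero_one hμ)

lemma existsUnique_collinearUx_eq_zero_Ioi {μ : ℝ} (hμ : μ ∈ Ioo 0 1) :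
    ∃! a, a ∈ Ioi (1 - μ) ∧ collinearUx μ a = 0 := by
  refine (Equiv.neg ℝ).existsUnique_congr (fun a => ?_) |>.mp
    (existsUnique_collinearUx_eq_zero_Iio (one_sub_mem_Ioo_zero_one hμ))
  have h := collinearUx_one_sub_neg (1 - μ) a
  rw [sub_sub_cancel] at h
  simp only [Equiv.neg_apply, mem_Ioi, mem_Iio, h, neg_eq_zero, lt_neg]

/-- For every μ ∈ (0,1), each of the three open intervals
(−∞,−μ), (−μ,1−μ), (1−μ,∞) contains exactly one real x with (x,0) a critical
point of the effective potential (U_x(x,0) = 0; U_y(x,0) = 0 holds automatically):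
the collinear Lagrange points. -/
theorem stmt5 (μ : ℝ) (hμ : μ ∈ Set.Ioo (0:ℝ) 1)
    (r1 r2 : ℝ → ℝ → ℝ)
    (hr1def : ∀ a b, r1 a b = Real.sqrt ((a + μ)^2 + b^2))
    (hr2def : ∀ a b, r2 a b = Real.sqrt ((a - 1 + μ)^2 + b^2))
    (Ux Uy : ℝ → ℝ → ℝ)
    (hUx : ∀ a b, Ux a b =
      a - (1 - μ) * (a + μ) / (r1 a b)^3 - μ * (a - 1 + μ) / (r2 a b)^3)
    (hUy : ∀ a b, Uy a b =
      b - (1 - μ) * b / (r1 a b)^3 - μ * b / (r2 a b)^3) :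
    (∀ a : ℝ, Uy a 0 = 0) ∧
    (∃! a : ℝ, a ∈ Set.Iio (-μ) ∧ Ux a 0 = 0) ∧
    (∃! a : ℝ, a ∈ Set.Ioo (-μ) (1 - μ) ∧ Ux a 0 = 0) ∧
    (∃! a : ℝ, a ∈ Set.Ioi (1 - μ) ∧ Ux a 0 = 0) := by
  have hUx₀ : ∀ a, Ux a 0 = collinearUx μ a := fun a => by
    simp only [hUx, hr1def, hr2def, collinearUx, signedInvSq, ne_eq, OfNat.ofNat_ne_zero,
      not_false_eq_true, zero_pow, add_zero, Real.sqrt_sq_eq_abs]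
    ring
  simp only [hUx₀]
  exact ⟨fun a => by simp [hUy], existsUnique_collinearUx_eq_zero_Iio hμ,
    existsUnique_collinearUx_eq_zero_Ioo hμ, existsUnique_collinearUx_eq_zero_Ioi hμ⟩
end

section
/- For every μ ∈ (0,1), the effective potential U has exactly five critical points on its domain {(x, y) ∈ ℝ² : (x, y) ≠ (−μ, 0) and (x, y) ≠ (1−μ, 0)}: three collinear points on the x-axis (one in each of the intervals (−∞, −μ), (−μ, 1−μ), (1−μ, ∞)) and the two equilateral points (1/2 − μ, ±√3/2). -/
set_option maxHeartbeats 1000000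


lemma uniq_zero (f : ℝ → ℝ) (s : Set ℝ) (hs : s.OrdConnected)
    (hm : StrictMonoOn f s) (hc : ContinuousOn f s) {u v : ℝ}
    (hu : u ∈ s) (hv : v ∈ s) (hfu : f u < 0) (hfv : 0 < f v) :
    ∃ x ∈ s, f x = 0 ∧ ∀ y ∈ s, f y = 0 → y = x := by
  have huv : u < v := by
    rcases lt_or_ge u v with h | h
    · exact h
    · have := hm.monotoneOn hv hu h; linarith
  have hsub : Set.Icc u v ⊆ s := hs.out hu hv
  obtain ⟨x, hx, hfx⟩ := intermediate_value_Icc huv.le (hc.mono hsub) ⟨hfu.le, hfv.le⟩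
  exact ⟨x, hsub hx, hfx, fun y hy hfy => hm.injOn hy (hsub hx) (by rw [hfy, hfx])⟩

lemma sqrt_min_facts (c : ℝ) (hc : 0 < c) (d : ℝ) (hd : 0 < d) :
    0 < min d (Real.sqrt c) ∧ min d (Real.sqrt c) ≤ d ∧ (min d (Real.sqrt c))^2 ≤ c := by
  have hs : 0 < Real.sqrt c := Real.sqrt_pos.mpr hc
  refine ⟨lt_min hd hs, min_le_left _ _, ?_⟩
  calc (min d (Real.sqrt c))^2 ≤ (Real.sqrt c)^2 := by
        apply pow_le_pow_left₀ (le_of_lt (lt_min hd hs)) (min_le_right _ _)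
      _ = c := Real.sq_sqrt hc.le

/-- Left region -/
lemma left_zero (μ : ℝ) (h0 : 0 < μ) (h1 : μ < 1) :
    ∃ x ∈ Set.Iio (-μ),
      (x + (1-μ)/(x+μ)^2 + μ/(x-1+μ)^2 = 0) ∧
      ∀ y ∈ Set.Iio (-μ), y + (1-μ)/(y+μ)^2 + μ/(y-1+μ)^2 = 0 → y = x := by
  set f : ℝ → ℝ := fun a => a + (1-μ)/(a+μ)^2 + μ/(a-1+μ)^2 with hf
  have hm : StrictMonoOn f (Set.Iio (-μ)) := by
    intro a ha b hb hab
    simp only [Set.mem_Iio] at ha hb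
    have h2 : (b+μ)^2 ≤ (a+μ)^2 := by nlinarith
    have h3 : (b-1+μ)^2 ≤ (a-1+μ)^2 := by nlinarith
    have p2 : (0:ℝ) < (b+μ)^2 := by nlinarith
    have p3 : (0:ℝ) < (b-1+μ)^2 := by nlinarith
    have i1 : (1-μ)/(a+μ)^2 ≤ (1-μ)/(b+μ)^2 := by gcongr <;> linarith
    have i2 : μ/(a-1+μ)^2 ≤ μ/(b-1+μ)^2 := by gcongr
    simp only [hf]; linarith
  have hc : ContinuousOn f (Set.Iio (-μ)) := by
    apply ContinuousOn.add
    apply ContinuousOn.add continuousOn_id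
    · exact ContinuousOn.div continuousOn_const (by fun_prop)
        (fun a ha => pow_ne_zero 2 (by simp only [Set.mem_Iio] at ha; intro h; nlinarith))
    · exact ContinuousOn.div continuousOn_const (by fun_prop)
        (fun a ha => pow_ne_zero 2 (by simp only [Set.mem_Iio] at ha; intro h; nlinarith))
  obtain ⟨hs0, hs1, hs2⟩ := sqrt_min_facts ((1-μ)/2) (by linarith) 1 one_pos
  set s := min 1 (Real.sqrt ((1-μ)/2)) with hsdef
  have hu : -μ - 2 ∈ Set.Iio (-μ) := by simp only [Set.mem_Iio]; linarith
  have hv : -μ - s ∈ Set.Iio (-μ) := by simp only [Set.mem_Iio]; linarith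
  have hfu : f (-μ-2) < 0 := by
    show -μ-2 + (1-μ)/(-μ-2+μ)^2 + μ/(-μ-2-1+μ)^2 < 0
    have e1 : (-μ-2+μ)^2 = (4:ℝ) := by ring
    have e2 : (-μ-2-1+μ)^2 = (9:ℝ) := by ring
    rw [e1, e2]; nlinarith
  have hfv : 0 < f (-μ-s) := by
    simp only [hf]
    have e1 : (-μ-s+μ)^2 = s^2 := by ring
    have e2 : (-μ-s-1+μ)^2 = (s+1)^2 := by ring
    rw [e1, e2]
    have k1 : (2:ℝ) ≤ (1-μ)/s^2 := by
      rw [le_div_iff₀ (by positivity)]; linarith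
    have k2 : 0 < μ/(s+1)^2 := by positivity
    linarith
  obtain ⟨x, hx, hfx, hun⟩ := uniq_zero f _ Set.ordConnected_Iio hm hc hu hv hfu hfv
  exact ⟨x, hx, hfx, hun⟩

lemma mid_zero (μ : ℝ) (h0 : 0 < μ) (h1 : μ < 1) :
    ∃ x ∈ Set.Ioo (-μ) (1-μ),
      (x - (1-μ)/(x+μ)^2 + μ/(x-1+μ)^2 = 0) ∧
      ∀ y ∈ Set.Ioo (-μ) (1-μ), y - (1-μ)/(y+μ)^2 + μ/(y-1+μ)^2 = 0 → y = x := by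
  set f : ℝ → ℝ := fun a => a - (1-μ)/(a+μ)^2 + μ/(a-1+μ)^2 with hf
  have hm : StrictMonoOn f (Set.Ioo (-μ) (1-μ)) := by
    intro a ha b hb hab
    simp only [Set.mem_Ioo] at ha hb
    have h2 : (a+μ)^2 ≤ (b+μ)^2 := by nlinarith [ha.1, hb.1]
    have h3 : (b-1+μ)^2 ≤ (a-1+μ)^2 := by nlinarith [ha.2, hb.2]
    have p2 : (0:ℝ) < (a+μ)^2 := by nlinarith [ha.1]
    have p3 : (0:ℝ) < (b-1+μ)^2 := by nlinarith [hb.2]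
    have i1 : (1-μ)/(b+μ)^2 ≤ (1-μ)/(a+μ)^2 := by gcongr <;> linarith
    have i2 : μ/(a-1+μ)^2 ≤ μ/(b-1+μ)^2 := by gcongr
    simp only [hf]; linarith
  have hc : ContinuousOn f (Set.Ioo (-μ) (1-μ)) := by
    apply ContinuousOn.add
    apply ContinuousOn.sub continuousOn_id
    · exact ContinuousOn.div continuousOn_const (by fun_prop)
        (fun a ha => pow_ne_zero 2 (by simp only [Set.mem_Ioo] at ha; intro h; nlinarith [ha.1]))
    · exact ContinuousOn.div continuousOn_const (by fun_prop)
        (fun a ha => pow_ne_zero 2 (by simp only [Set.mem_Ioo] at ha; intro h; nlinarith [ha.2]))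
  obtain ⟨hs0, hs1, hs2⟩ := sqrt_min_facts ((1-μ)/5) (by linarith) (1/2) (by norm_num)
  set s2 := min (1/2) (Real.sqrt ((1-μ)/5)) with hs2def
  obtain ⟨ht0, ht1, ht2⟩ := sqrt_min_facts (μ/5) (by linarith) (1/2) (by norm_num)
  set s3 := min (1/2) (Real.sqrt (μ/5)) with hs3def
  have hu : -μ + s2 ∈ Set.Ioo (-μ) (1-μ) := by
    simp only [Set.mem_Ioo]; constructor <;> linarith
  have hv : 1 - μ - s3 ∈ Set.Ioo (-μ) (1-μ) := by
    simp only [Set.mem_Ioo]; constructor <;> linarith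
  have hfu : f (-μ+s2) < 0 := by
    show -μ+s2 - (1-μ)/(-μ+s2+μ)^2 + μ/(-μ+s2-1+μ)^2 < 0
    have e1 : (-μ+s2+μ)^2 = s2^2 := by ring
    have e2 : (-μ+s2-1+μ)^2 = (s2-1)^2 := by ring
    rw [e1, e2]
    have q1 : (0:ℝ) < (s2-1)^2 := by nlinarith
    have k1 : (5:ℝ) ≤ (1-μ)/s2^2 := by rw [le_div_iff₀ (by positivity)]; linarith
    have k2 : μ/(s2-1)^2 ≤ 4*μ := by rw [div_le_iff₀ q1]; nlinarith [mul_nonneg (mul_nonneg h0.le (by linarith : (0:ℝ) ≤ 3 - 2*s2)) (by linarith : (0:ℝ) ≤ 1 - 2*s2)]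
    linarith
  have hfv : 0 < f (1-μ-s3) := by
    show 0 < 1-μ-s3 - (1-μ)/(1-μ-s3+μ)^2 + μ/(1-μ-s3-1+μ)^2
    have e1 : (1-μ-s3+μ)^2 = (1-s3)^2 := by ring
    have e2 : (1-μ-s3-1+μ)^2 = s3^2 := by ring
    rw [e1, e2]
    have q1 : (0:ℝ) < (1-s3)^2 := by nlinarith
    have k1 : (5:ℝ) ≤ μ/s3^2 := by rw [le_div_iff₀ (by positivity)]; linarith
    have k2 : (1-μ)/(1-s3)^2 ≤ 4*(1-μ) := by rw [div_le_iff₀ q1]; nlinarith [mul_nonneg (mul_nonneg (by linarith : (0:ℝ) ≤ 1-μ) (by linarith : (0:ℝ) ≤ 3 - 2*s3)) (by linarith : (0:ℝ) ≤ 1 - 2*s3)]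
    linarith
  obtain ⟨x, hx, hfx, hun⟩ := uniq_zero f _ Set.ordConnected_Ioo hm hc hu hv hfu hfv
  exact ⟨x, hx, hfx, hun⟩

lemma right_zero (μ : ℝ) (h0 : 0 < μ) (h1 : μ < 1) :
    ∃ x ∈ Set.Ioi (1-μ),
      (x - (1-μ)/(x+μ)^2 - μ/(x-1+μ)^2 = 0) ∧
      ∀ y ∈ Set.Ioi (1-μ), y - (1-μ)/(y+μ)^2 - μ/(y-1+μ)^2 = 0 → y = x := by
  set f : ℝ → ℝ := fun a => a - (1-μ)/(a+μ)^2 - μ/(a-1+μ)^2 with hf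
  have hm : StrictMonoOn f (Set.Ioi (1-μ)) := by
    intro a ha b hb hab
    simp only [Set.mem_Ioi] at ha hb
    have h2 : (a+μ)^2 ≤ (b+μ)^2 := by nlinarith
    have h3 : (a-1+μ)^2 ≤ (b-1+μ)^2 := by nlinarith
    have p2 : (0:ℝ) < (a+μ)^2 := by nlinarith
    have p3 : (0:ℝ) < (a-1+μ)^2 := by nlinarith
    have i1 : (1-μ)/(b+μ)^2 ≤ (1-μ)/(a+μ)^2 := by gcongr <;> linarith
    have i2 : μ/(b-1+μ)^2 ≤ μ/(a-1+μ)^2 := by gcongr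
    simp only [hf]; linarith
  have hc : ContinuousOn f (Set.Ioi (1-μ)) := by
    apply ContinuousOn.sub
    apply ContinuousOn.sub continuousOn_id
    · exact ContinuousOn.div continuousOn_const (by fun_prop)
        (fun a ha => pow_ne_zero 2 (by simp only [Set.mem_Ioi] at ha; intro h; nlinarith))
    · exact ContinuousOn.div continuousOn_const (by fun_prop)
        (fun a ha => pow_ne_zero 2 (by simp only [Set.mem_Ioi] at ha; intro h; nlinarith))
  obtain ⟨hs0, hs1, hs2⟩ := sqrt_min_facts (μ/2) (by linarith) (1/2) (by norm_num)
  set s4 := min (1/2) (Real.sqrt (μ/2)) with hs4def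
  have hu : 1 - μ + s4 ∈ Set.Ioi (1-μ) := by simp only [Set.mem_Ioi]; linarith
  have hv : (2:ℝ) ∈ Set.Ioi (1-μ) := by simp only [Set.mem_Ioi]; linarith
  have hfu : f (1-μ+s4) < 0 := by
    show 1-μ+s4 - (1-μ)/(1-μ+s4+μ)^2 - μ/(1-μ+s4-1+μ)^2 < 0
    have e1 : (1-μ+s4+μ)^2 = (1+s4)^2 := by ring
    have e2 : (1-μ+s4-1+μ)^2 = s4^2 := by ring
    rw [e1, e2]
    have k1 : (2:ℝ) ≤ μ/s4^2 := by rw [le_div_iff₀ (pow_pos hs0 2)]; linarith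
    have k2 : 0 < (1-μ)/(1+s4)^2 := div_pos (by linarith) (by nlinarith)
    linarith
  have hfv : 0 < f 2 := by
    show 0 < 2 - (1-μ)/(2+μ)^2 - μ/(2-1+μ)^2
    have q1 : (0:ℝ) < (2+μ)^2 := by nlinarith
    have q2 : (0:ℝ) < (2-1+μ)^2 := by nlinarith
    have k1 : (1-μ)/(2+μ)^2 ≤ 1/4 := by rw [div_le_iff₀ q1]; nlinarith
    have k2 : μ/(2-1+μ)^2 ≤ 1 := by rw [div_le_iff₀ q2]; nlinarith
    linarith
  obtain ⟨x, hx, hfx, hun⟩ := uniq_zero f _ Set.ordConnected_Ioi hm hc hu hv hfu hfv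
  exact ⟨x, hx, hfx, hun⟩

lemma div_negcube (x c : ℝ) (hx : x ≠ 0) : c*x/(-x)^3 = -(c/x^2) := by
  rw [show (-x)^3 = -(x^3) by ring, div_neg, neg_inj, show x^3 = x^2*x by ring,
    mul_comm (x^2) x, ← div_div, mul_div_assoc, div_self hx, mul_one]

lemma div_cube (x c : ℝ) (hx : x ≠ 0) : c*x/x^3 = c/x^2 := by
  rw [show x^3 = x^2*x by ring,
    mul_comm (x^2) x, ← div_div, mul_div_assoc, div_self hx, mul_one]


/-- For every μ ∈ (0,1), the effective potential has exactly five
critical points on its domain (the plane with the two primaries removed): three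
collinear points on the x-axis, one in each of the intervals (−∞,−μ), (−μ,1−μ),
(1−μ,∞), and the two equilateral points (1/2 − μ, ±√3/2). -/
theorem stmt7 (μ : ℝ) (hμ : μ ∈ Set.Ioo (0:ℝ) 1)
    (r1 r2 : ℝ → ℝ → ℝ)
    (hr1def : ∀ a b, r1 a b = Real.sqrt ((a + μ)^2 + b^2))
    (hr2def : ∀ a b, r2 a b = Real.sqrt ((a - 1 + μ)^2 + b^2))
    (Ux Uy : ℝ → ℝ → ℝ)
    (hUx : ∀ a b, Ux a b =
      a - (1 - μ) * (a + μ) / (r1 a b)^3 - μ * (a - 1 + μ) / (r2 a b)^3)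
    (hUy : ∀ a b, Uy a b =
      b - (1 - μ) * b / (r1 a b)^3 - μ * b / (r2 a b)^3) :
    ∃ x1 x2 x3 : ℝ,
      x1 < -μ ∧ -μ < x2 ∧ x2 < 1 - μ ∧ 1 - μ < x3 ∧
      {p : ℝ × ℝ | p ≠ (-μ, 0) ∧ p ≠ (1 - μ, 0) ∧ Ux p.1 p.2 = 0 ∧ Uy p.1 p.2 = 0} =
        {(x1, 0), (x2, 0), (x3, 0),
          (1/2 - μ, Real.sqrt 3 / 2), (1/2 - μ, -(Real.sqrt 3 / 2))} ∧
      ({(x1, (0:ℝ)), (x2, 0), (x3, 0),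
          (1/2 - μ, Real.sqrt 3 / 2), (1/2 - μ, -(Real.sqrt 3 / 2))} : Set (ℝ × ℝ)).ncard = 5 := by
  obtain ⟨h0, h1⟩ := hμ
  obtain ⟨x1, hx1I, hx1z, hx1u⟩ := left_zero μ h0 h1
  obtain ⟨x2, hx2I, hx2z, hx2u⟩ := mid_zero μ h0 h1
  obtain ⟨x3, hx3I, hx3z, hx3u⟩ := right_zero μ h0 h1
  have hx1lt : x1 < -μ := hx1I
  obtain ⟨hx2l, hx2r⟩ : -μ < x2 ∧ x2 < 1 - μ := hx2I
  have hx3gt : 1 - μ < x3 := hx3I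
  -- axis formulas
  have axis1 : ∀ a : ℝ, a < -μ → Ux a 0 = a + (1-μ)/(a+μ)^2 + μ/(a-1+μ)^2 := by
    intro a ha
    have hA : a + μ < 0 := by linarith
    have hB : a - 1 + μ < 0 := by linarith
    have hr1 : r1 a 0 = -(a+μ) := by
      rw [hr1def, show (a+μ)^2 + (0:ℝ)^2 = (-(a+μ))^2 by ring, Real.sqrt_sq (by linarith)]
    have hr2 : r2 a 0 = -(a-1+μ) := by
      rw [hr2def, show (a-1+μ)^2 + (0:ℝ)^2 = (-(a-1+μ))^2 by ring, Real.sqrt_sq (by linarith)]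
    have hA' : a + μ ≠ 0 := ne_of_lt hA
    have hB' : a - 1 + μ ≠ 0 := ne_of_lt hB
    rw [hUx, hr1, hr2, div_negcube _ _ hA', div_negcube _ _ hB']
    ring
  have axis2 : ∀ a : ℝ, -μ < a → a < 1 - μ → Ux a 0 = a - (1-μ)/(a+μ)^2 + μ/(a-1+μ)^2 := by
    intro a ha ha'
    have hA : 0 < a + μ := by linarith
    have hB : a - 1 + μ < 0 := by linarith
    have hr1 : r1 a 0 = a+μ := by
      rw [hr1def, show (a+μ)^2 + (0:ℝ)^2 = (a+μ)^2 by ring, Real.sqrt_sq (by linarith)]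
    have hr2 : r2 a 0 = -(a-1+μ) := by
      rw [hr2def, show (a-1+μ)^2 + (0:ℝ)^2 = (-(a-1+μ))^2 by ring, Real.sqrt_sq (by linarith)]
    have hA' : a + μ ≠ 0 := ne_of_gt hA
    have hB' : a - 1 + μ ≠ 0 := ne_of_lt hB
    rw [hUx, hr1, hr2, div_cube _ _ hA', div_negcube _ _ hB']
    ring
  have axis3 : ∀ a : ℝ, 1 - μ < a → Ux a 0 = a - (1-μ)/(a+μ)^2 - μ/(a-1+μ)^2 := by
    intro a ha
    have hA : 0 < a + μ := by linarith
    have hB : 0 < a - 1 + μ := by linarith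
    have hr1 : r1 a 0 = a+μ := by
      rw [hr1def, show (a+μ)^2 + (0:ℝ)^2 = (a+μ)^2 by ring, Real.sqrt_sq (by linarith)]
    have hr2 : r2 a 0 = a-1+μ := by
      rw [hr2def, show (a-1+μ)^2 + (0:ℝ)^2 = (a-1+μ)^2 by ring, Real.sqrt_sq (by linarith)]
    have hA' : a + μ ≠ 0 := ne_of_gt hA
    have hB' : a - 1 + μ ≠ 0 := ne_of_gt hB
    rw [hUx, hr1, hr2, div_cube _ _ hA', div_cube _ _ hB']
  have axisUy : ∀ a : ℝ, Uy a 0 = 0 := by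
    intro a; rw [hUy]; ring
  -- off-axis classification
  have offaxis : ∀ a b : ℝ, b ≠ 0 → Ux a b = 0 → Uy a b = 0 →
      a = 1/2 - μ ∧ (b = Real.sqrt 3 / 2 ∨ b = -(Real.sqrt 3 / 2)) := by
    intro a b hb hx hy
    have hb2 : 0 < b^2 := pow_two_pos_of_ne_zero hb
    have hq1 : 0 < (a+μ)^2 + b^2 := by nlinarith [sq_nonneg (a+μ)]
    have hq2 : 0 < (a-1+μ)^2 + b^2 := by nlinarith [sq_nonneg (a-1+μ)]
    have hr1p : 0 < r1 a b := by rw [hr1def]; exact Real.sqrt_pos.mpr hq1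
    have hr2p : 0 < r2 a b := by rw [hr2def]; exact Real.sqrt_pos.mpr hq2
    have hr1sq : (r1 a b)^2 = (a+μ)^2 + b^2 := by rw [hr1def]; exact Real.sq_sqrt hq1.le
    have hr2sq : (r2 a b)^2 = (a-1+μ)^2 + b^2 := by rw [hr2def]; exact Real.sq_sqrt hq2.le
    set R1 := r1 a b with hR1
    set R2 := r2 a b with hR2
    rw [hUx] at hx
    rw [hUy] at hy
    have hE : 1 - (1-μ)/R1^3 - μ/R2^3 = 0 := by
      have key : b * (1 - (1-μ)/R1^3 - μ/R2^3) = b - (1-μ)*b/R1^3 - μ*b/R2^3 := by ring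
      have : b * (1 - (1-μ)/R1^3 - μ/R2^3) = 0 := by rw [key]; exact hy
      rcases mul_eq_zero.mp this with h | h
      · exact absurd h hb
      · exact h
    have hdiff : μ*(1-μ)*(1/R2^3 - 1/R1^3) = 0 := by
      have key : a - (1-μ)*(a+μ)/R1^3 - μ*(a-1+μ)/R2^3
          = a * (1 - (1-μ)/R1^3 - μ/R2^3) + μ*(1-μ)*(1/R2^3 - 1/R1^3) := by ring
      rw [key, hE] at hx
      linarith [hx]
    have hinv : 1/R2^3 - 1/R1^3 = 0 := by
      have hμμ : μ*(1-μ) ≠ 0 := ne_of_gt (mul_pos h0 (by linarith))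
      rcases mul_eq_zero.mp hdiff with h | h
      · exact absurd h hμμ
      · exact h
    have hcube : R1^3 = R2^3 := by
      field_simp [hr1p.ne', hr2p.ne'] at hinv
      linarith [hinv]
    have hReq : R1 = R2 := by
      have hfac : (R1 - R2) * (R1^2 + R1*R2 + R2^2) = 0 := by linear_combination hcube
      have hpos : 0 < R1^2 + R1*R2 + R2^2 := by positivity
      rcases mul_eq_zero.mp hfac with h | h
      · linarith
      · linarith
    have hR1cube : R1^3 = 1 := by
      rw [← hReq] at hE
      have hsum : (1-μ)/R1^3 + μ/R1^3 = 1/R1^3 := by ring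
      have : 1 - 1/R1^3 = 0 := by linarith [hE, hsum]
      field_simp [hr1p.ne'] at this
      linarith [this]
    have hR1one : R1 = 1 := by
      have hfac : (R1 - 1) * (R1^2 + R1 + 1) = 0 := by linear_combination hR1cube
      have hpos : 0 < R1^2 + R1 + 1 := by positivity
      rcases mul_eq_zero.mp hfac with h | h
      · linarith
      · linarith
    have hR2one : R2 = 1 := by rw [← hReq]; exact hR1one
    rw [hR1one] at hr1sq
    rw [hR2one] at hr2sq
    have ha : a = 1/2 - μ := by nlinarith [hr1sq, hr2sq]
    have hbsq : b^2 = 3/4 := by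
      rw [ha] at hr1sq; nlinarith [hr1sq]
    refine ⟨ha, ?_⟩
    have hsq : b^2 = (Real.sqrt 3 / 2)^2 := by
      rw [div_pow, Real.sq_sqrt (by norm_num : (3:ℝ) ≥ 0)]
      rw [hbsq]; norm_num
    rcases sq_eq_sq_iff_eq_or_eq_neg.mp hsq with h | h
    · exact Or.inl h
    · exact Or.inr h
  -- equilateral points are critical
  have heq : ∀ b : ℝ, b^2 = 3/4 → Ux (1/2-μ) b = 0 ∧ Uy (1/2-μ) b = 0 := by
    intro b hb
    have hr1 : r1 (1/2-μ) b = 1 := by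
      rw [hr1def, show (1/2-μ+μ)^2 + b^2 = 1 by rw [hb]; ring]
      exact Real.sqrt_one
    have hr2 : r2 (1/2-μ) b = 1 := by
      rw [hr2def, show (1/2-μ-1+μ)^2 + b^2 = 1 by rw [hb]; ring]
      exact Real.sqrt_one
    constructor
    · rw [hUx, hr1, hr2]; ring
    · rw [hUy, hr1, hr2]; ring
  have hs3pos : 0 < Real.sqrt 3 / 2 := by positivity
  have hbsq1 : (Real.sqrt 3 / 2)^2 = 3/4 := by
    rw [div_pow, Real.sq_sqrt (by norm_num : (3:ℝ) ≥ 0)]; norm_num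
  have hbsq2 : (-(Real.sqrt 3 / 2))^2 = 3/4 := by rw [neg_pow]; simp [hbsq1]
  refine ⟨x1, x2, x3, hx1lt, hx2l, hx2r, hx3gt, ?_, ?_⟩
  · ext ⟨a, b⟩
    simp only [Set.mem_setOf_eq, Set.mem_insert_iff, Set.mem_singleton_iff, Prod.mk.injEq,
      ne_eq]
    constructor
    · rintro ⟨hne1, hne2, hx, hy⟩
      by_cases hb : b = 0
      · subst hb
        have hane1 : a ≠ -μ := fun h => hne1 ⟨h, rfl⟩
        have hane2 : a ≠ 1 - μ := fun h => hne2 ⟨h, rfl⟩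
        rcases lt_trichotomy a (-μ) with h | h | h
        · exact Or.inl ⟨hx1u a h (by rw [← axis1 a h]; exact hx), rfl⟩
        · exact absurd h hane1
        · rcases lt_trichotomy a (1-μ) with h' | h' | h'
          · exact Or.inr (Or.inl ⟨hx2u a ⟨h, h'⟩ (by rw [← axis2 a h h']; exact hx), rfl⟩)
          · exact absurd h' hane2
          · exact Or.inr (Or.inr (Or.inl ⟨hx3u a h' (by rw [← axis3 a h']; exact hx), rfl⟩))
      · obtain ⟨ha, hbc⟩ := offaxis a b hb hx hy
        rcases hbc with h | h
        · exact Or.inr (Or.inr (Or.inr (Or.inl ⟨ha, h⟩)))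
        · exact Or.inr (Or.inr (Or.inr (Or.inr ⟨ha, h⟩)))
    · rintro (⟨ha, rfl⟩ | ⟨ha, rfl⟩ | ⟨ha, rfl⟩ | ⟨ha, rfl⟩ | ⟨ha, rfl⟩) <;> subst ha
      · refine ⟨?_, ?_, by rw [axis1 a hx1lt]; exact hx1z, axisUy a⟩
        · intro h; linarith [h.1]
        · intro h; linarith [h.1]
      · refine ⟨?_, ?_, by rw [axis2 a hx2l hx2r]; exact hx2z, axisUy a⟩
        · intro h; linarith [h.1]
        · intro h; linarith [h.1]
      · refine ⟨?_, ?_, by rw [axis3 a hx3gt]; exact hx3z, axisUy a⟩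
        · intro h; linarith [h.1]
        · intro h; linarith [h.1]
      · obtain ⟨hu, hv⟩ := heq (Real.sqrt 3 / 2) hbsq1
        refine ⟨?_, ?_, hu, hv⟩
        · intro h; linarith [h.2]
        · intro h; linarith [h.2]
      · obtain ⟨hu, hv⟩ := heq (-(Real.sqrt 3 / 2)) hbsq2
        refine ⟨?_, ?_, hu, hv⟩
        · intro h; linarith [h.2]
        · intro h; linarith [h.2]
  · have hd12 : x1 ≠ x2 := by intro h; linarith
    have hd13 : x1 ≠ x3 := by intro h; linarith
    have hd23 : x2 ≠ x3 := by intro h; linarith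
    rw [Set.ncard_insert_of_notMem (by
        simp only [Set.mem_insert_iff, Set.mem_singleton_iff, Prod.mk.injEq, not_or]
        refine ⟨fun h => hd12 h.1, fun h => hd13 h.1, fun h => absurd h.2 (by linarith),
          fun h => absurd h.2 (by linarith)⟩) (Set.toFinite _),
      Set.ncard_insert_of_notMem (by
        simp only [Set.mem_insert_iff, Set.mem_singleton_iff, Prod.mk.injEq, not_or]
        refine ⟨fun h => hd23 h.1, fun h => absurd h.2 (by linarith),
          fun h => absurd h.2 (by linarith)⟩) (Set.toFinite _),
      Set.ncard_insert_of_notMem (by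
        simp only [Set.mem_insert_iff, Set.mem_singleton_iff, Prod.mk.injEq, not_or]
        refine ⟨fun h => absurd h.2 (by linarith), fun h => absurd h.2 (by linarith)⟩)
        (Set.toFinite _),
      Set.ncard_insert_of_notMem (by
        simp only [Set.mem_singleton_iff, Prod.mk.injEq, not_and]
        intro _ h; linarith) (Set.toFinite _),
      Set.ncard_singleton]
end

section
/- Let μ ∈ (0,1) and h > 0, and let Φ denote the one-step map of the trapezoidal variational integrator for the PCRTBP with zero control, expressed in the canonical coordinates (x, y, p_x, p_y) with p_x = ẋ − y and p_y = ẏ + x; Φ is defined on the open set of points for which r₁, r₂ > 0 both at the current step and at the updated step. Then Φ is symplectic: at every point of its domain where Φ is differentiable, its Jacobian matrix DΦ satisfies (DΦ)ᵀ J (DΦ) = J, where J is the canonical 4×4 symplectic matrix pairing (x, y) with (p_x, p_y). -/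
/-!
In the canonical variables `(q, p)` the trapezoidal step splits as kick–drift–kick,
`Φ = K ∘ D ∘ K` with `K (q, p) = (q, p - (h/2) G q)` and `D = driftMatrix h` linear, where
`G = (Uₓ - x, U_y - y) = -∇Ω` is the force of the effective potential
`Ω = (x² + y²)/2 + (1 - μ)/r₁ + μ/r₂`. The Jacobian of `K` is the shear
`[[1, 0], [-(h/2) S, 1]]` with `S = DG` symmetric, hence symplectic; `D` is symplectic by a
direct computation, and the chain rule concludes.
-/

open Matrix Function

section Symplectic

variable {n R : Type*} [Fintype n] [CommRing R]

def IsSymplectic (J M : Matrix n n R) : Prop := Mᵀ * J * M = J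

theorem IsSymplectic.mul {J A B : Matrix n n R} (hA : IsSymplectic J A)
    (hB : IsSymplectic J B) : IsSymplectic J (A * B) :=
  calc (A * B)ᵀ * J * (A * B) = Bᵀ * (Aᵀ * J * A) * B := by
        simp only [transpose_mul, Matrix.mul_assoc]
    _ = J := by rw [hA, hB]

end Symplectic

def canonicalJ : Matrix (Fin 4) (Fin 4) ℝ :=
  !![0, 0, 1, 0; 0, 0, 0, 1; -1, 0, 0, 0; 0, -1, 0, 0]

theorem transpose_mul_canonicalJ_mul_apply (M : Matrix (Fin 4) (Fin 4) ℝ) (i j : Fin 4) :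
    (Mᵀ * canonicalJ * M) i j
      = M 0 i * M 2 j + M 1 i * M 3 j - M 2 i * M 0 j - M 3 i * M 1 j := by
  simp [canonicalJ, Matrix.mul_apply, Fin.sum_univ_four]
  ring

section Jacobian

variable {l m n : ℕ}

noncomputable def jacobian (f : (Fin n → ℝ) → Fin m → ℝ) (p : Fin n → ℝ) :
    Matrix (Fin m) (Fin n) ℝ :=
  Matrix.of fun i j => fderiv ℝ f p (Pi.single j 1) i

theorem jacobian_eq_toMatrix' (f : (Fin n → ℝ) → Fin m → ℝ) (p : Fin n → ℝ) :
    jacobian f p = LinearMap.toMatrix' (fderiv ℝ f p : (Fin n → ℝ) →ₗ[ℝ] Fin m → ℝ) := by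
  ext i j
  simp [jacobian, LinearMap.toMatrix'_apply]

theorem jacobian_comp {f : (Fin m → ℝ) → Fin l → ℝ} {g : (Fin n → ℝ) → Fin m → ℝ}
    {p : Fin n → ℝ} (hf : DifferentiableAt ℝ f (g p)) (hg : DifferentiableAt ℝ g p) :
    jacobian (f ∘ g) p = jacobian f (g p) * jacobian g p := by
  simp only [jacobian_eq_toMatrix', fderiv_comp p hf hg]
  exact LinearMap.toMatrix'_comp _ _

theorem HasFDerivAt.jacobian_eq {f : (Fin n → ℝ) → Fin m → ℝ} {p : Fin n → ℝ}
    {M : Matrix (Fin m) (Fin n) ℝ}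
    (hf : HasFDerivAt f (LinearMap.toContinuousLinearMap (Matrix.toLin' M)) p) :
    jacobian f p = M := by
  rw [jacobian_eq_toMatrix', hf.fderiv]
  exact LinearMap.toMatrix'_toLin' M

theorem hasFDerivAt_mulVec (M : Matrix (Fin m) (Fin n) ℝ) (p : Fin n → ℝ) :
    HasFDerivAt (M *ᵥ ·) (LinearMap.toContinuousLinearMap (Matrix.toLin' M)) p :=
  (LinearMap.toContinuousLinearMap (Matrix.toLin' M)).hasFDerivAt

end Jacobian

noncomputable def coordForm (a b : ℝ) : ℝ × ℝ →L[ℝ] ℝ :=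
  a • ContinuousLinearMap.fst ℝ ℝ ℝ + b • ContinuousLinearMap.snd ℝ ℝ ℝ

@[simp] theorem coordForm_apply (a b : ℝ) (v : ℝ × ℝ) :
    coordForm a b v = a * v.1 + b * v.2 := by
  simp [coordForm]

def HasSymmJacobianAt (Gx Gy : ℝ → ℝ → ℝ) (w : ℝ × ℝ) : Prop :=
  ∃ a b d : ℝ, HasFDerivAt (uncurry Gx) (coordForm a b) w ∧
    HasFDerivAt (uncurry Gy) (coordForm b d) w

namespace HasSymmJacobianAt

variable {Gx Gy Hx Hy : ℝ → ℝ → ℝ} {w : ℝ × ℝ}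

theorem add (hG : HasSymmJacobianAt Gx Gy w) (hH : HasSymmJacobianAt Hx Hy w) :
    HasSymmJacobianAt (fun a b => Gx a b + Hx a b) (fun a b => Gy a b + Hy a b) w := by
  obtain ⟨a, b, d, hGx, hGy⟩ := hG
  obtain ⟨a', b', d', hHx, hHy⟩ := hH
  refine ⟨a + a', b + b', d + d', (hGx.add hHx).congr_fderiv ?_,
    (hGy.add hHy).congr_fderiv ?_⟩ <;> ext <;> simp

theorem sub (hG : HasSymmJacobianAt Gx Gy w) (hH : HasSymmJacobianAt Hx Hy w) :
    HasSymmJacobianAt (fun a b => Gx a b - Hx a b) (fun a b => Gy a b - Hy a b) w := by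
  obtain ⟨a, b, d, hGx, hGy⟩ := hG
  obtain ⟨a', b', d', hHx, hHy⟩ := hH
  refine ⟨a - a', b - b', d - d', (hGx.sub hHx).congr_fderiv ?_,
    (hGy.sub hHy).congr_fderiv ?_⟩ <;> ext <;> simp

theorem const_mul (hG : HasSymmJacobianAt Gx Gy w) (c : ℝ) :
    HasSymmJacobianAt (fun a b => c * Gx a b) (fun a b => c * Gy a b) w := by
  obtain ⟨a, b, d, hGx, hGy⟩ := hG
  refine ⟨c * a, c * b, c * d, (hGx.const_mul c).congr_fderiv ?_,
    (hGy.const_mul c).congr_fderiv ?_⟩ <;> ext <;> simp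

end HasSymmJacobianAt

theorem hasSymmJacobianAt_id (w : ℝ × ℝ) :
    HasSymmJacobianAt (fun a _ => a) (fun _ b => b) w :=
  ⟨1, 0, 1, hasFDerivAt_fst.congr_fderiv (by ext <;> simp),
    hasFDerivAt_snd.congr_fderiv (by ext <;> simp)⟩

/-- `(keplerX e, keplerY e)` is the gradient of `-1/r`, `r` the distance to `(-e, 0)`. -/
noncomputable def keplerX (e a b : ℝ) : ℝ := (a + e) / √((a + e) ^ 2 + b ^ 2) ^ 3

noncomputable def keplerY (e a b : ℝ) : ℝ := b / √((a + e) ^ 2 + b ^ 2) ^ 3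

theorem hasFDerivAt_inv_dist_cube (e : ℝ) {w : ℝ × ℝ} (hw : 0 < √((w.1 + e) ^ 2 + w.2 ^ 2)) :
    HasFDerivAt (fun z : ℝ × ℝ => (√((z.1 + e) ^ 2 + z.2 ^ 2) ^ 3)⁻¹)
      (coordForm (-3 * (w.1 + e) / √((w.1 + e) ^ 2 + w.2 ^ 2) ^ 5)
        (-3 * w.2 / √((w.1 + e) ^ 2 + w.2 ^ 2) ^ 5)) w := by
  have hsq : HasFDerivAt (fun z : ℝ × ℝ => (z.1 + e) ^ 2 + z.2 ^ 2)
      (coordForm (2 * (w.1 + e)) (2 * w.2)) w :=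
    (((hasFDerivAt_fst.add_const e).pow 2).add (hasFDerivAt_snd.pow 2)).congr_fderiv
      (by ext <;> simp [mul_add])
  have hr := (hsq.sqrt (Real.sqrt_pos.mp hw).ne').pow 3
  refine ((hasDerivAt_inv (pow_ne_zero 3 hw.ne')).comp_hasFDerivAt w hr).congr_fderiv ?_
  ext <;> simp <;> field_simp

theorem hasSymmJacobianAt_kepler (e : ℝ) {w : ℝ × ℝ} (hw : 0 < √((w.1 + e) ^ 2 + w.2 ^ 2)) :
    HasSymmJacobianAt (keplerX e) (keplerY e) w := by
  have hρ := hasFDerivAt_inv_dist_cube e hw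
  obtain ⟨r, hr⟩ : ∃ r, √((w.1 + e) ^ 2 + w.2 ^ 2) = r := ⟨_, rfl⟩
  rw [hr] at hw hρ
  refine ⟨1 / r ^ 3 - 3 * (w.1 + e) ^ 2 / r ^ 5, -3 * (w.1 + e) * w.2 / r ^ 5,
    1 / r ^ 3 - 3 * w.2 ^ 2 / r ^ 5, ?_, ?_⟩
  · refine ((hasFDerivAt_fst.add_const e).mul hρ).congr_fderiv ?_
    ext <;> simp [hr] <;> field_simp; ring
  · refine (hasFDerivAt_snd.mul hρ).congr_fderiv ?_
    ext <;> simp [hr] <;> field_simp; ring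

theorem hasSymmJacobianAt_pcrtbp (μ : ℝ) {w : ℝ × ℝ} (h1 : 0 < √((w.1 + μ) ^ 2 + w.2 ^ 2))
    (h2 : 0 < √((w.1 - 1 + μ) ^ 2 + w.2 ^ 2)) :
    HasSymmJacobianAt
      (fun a b => (1 - μ) * (a + μ) / √((a + μ) ^ 2 + b ^ 2) ^ 3
        + μ * (a - 1 + μ) / √((a - 1 + μ) ^ 2 + b ^ 2) ^ 3 - a)
      (fun a b => (1 - μ) * b / √((a + μ) ^ 2 + b ^ 2) ^ 3
        + μ * b / √((a - 1 + μ) ^ 2 + b ^ 2) ^ 3 - b) w := by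
  have hshift (a : ℝ) : a - 1 + μ = a + (μ - 1) := by ring
  simp only [hshift] at h2 ⊢
  simpa only [keplerX, keplerY, mul_div_assoc] using
    (((hasSymmJacobianAt_kepler μ h1).const_mul (1 - μ)).add
      ((hasSymmJacobianAt_kepler (μ - 1) h2).const_mul μ)).sub (hasSymmJacobianAt_id w)

def kick (c : ℝ) (Gx Gy : ℝ → ℝ → ℝ) (q : Fin 4 → ℝ) : Fin 4 → ℝ :=
  ![q 0, q 1, q 2 - c * Gx (q 0) (q 1), q 3 - c * Gy (q 0) (q 1)]

def shearMatrix (c a b d : ℝ) : Matrix (Fin 4) (Fin 4) ℝ :=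
  !![1, 0, 0, 0; 0, 1, 0, 0; -(c * a), -(c * b), 1, 0; -(c * b), -(c * d), 0, 1]

theorem isSymplectic_shearMatrix (c a b d : ℝ) :
    IsSymplectic canonicalJ (shearMatrix c a b d) := by
  ext i j
  rw [transpose_mul_canonicalJ_mul_apply]
  fin_cases i <;> fin_cases j <;> simp [shearMatrix, canonicalJ]

theorem hasFDerivAt_kick (c : ℝ) {Gx Gy : ℝ → ℝ → ℝ} {a b d : ℝ} {q : Fin 4 → ℝ}
    (hGx : HasFDerivAt (uncurry Gx) (coordForm a b) (q 0, q 1))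
    (hGy : HasFDerivAt (uncurry Gy) (coordForm b d) (q 0, q 1)) :
    HasFDerivAt (kick c Gx Gy)
      (LinearMap.toContinuousLinearMap (Matrix.toLin' (shearMatrix c a b d))) q := by
  have hcoord (i : Fin 4) :
      HasFDerivAt (fun q : Fin 4 → ℝ => q i) (ContinuousLinearMap.proj i) q :=
    hasFDerivAt_apply (𝕜 := ℝ) i q
  have hπ := (hcoord 0).prodMk (hcoord 1)
  refine hasFDerivAt_pi'' fun i => ?_
  fin_cases i
  · exact (hcoord 0).congr_fderiv (by ext; simp [shearMatrix, dotProduct, Fin.sum_univ_four])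
  · exact (hcoord 1).congr_fderiv (by ext; simp [shearMatrix, dotProduct, Fin.sum_univ_four])
  · exact ((hcoord 2).sub ((hGx.comp q hπ).const_mul c)).congr_fderiv
      (by ext; simp [shearMatrix, dotProduct, Fin.sum_univ_four]; ring)
  · exact ((hcoord 3).sub ((hGy.comp q hπ).const_mul c)).congr_fderiv
      (by ext; simp [shearMatrix, dotProduct, Fin.sum_univ_four]; ring)

namespace HasSymmJacobianAt

variable {Gx Gy : ℝ → ℝ → ℝ} {q : Fin 4 → ℝ}

theorem differentiableAt_kick (hG : HasSymmJacobianAt Gx Gy (q 0, q 1)) (c : ℝ) :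
    DifferentiableAt ℝ (kick c Gx Gy) q :=
  let ⟨_, _, _, hGx, hGy⟩ := hG
  (hasFDerivAt_kick c hGx hGy).differentiableAt

theorem isSymplectic_jacobian_kick (hG : HasSymmJacobianAt Gx Gy (q 0, q 1)) (c : ℝ) :
    IsSymplectic canonicalJ (jacobian (kick c Gx Gy) q) := by
  obtain ⟨a, b, d, hGx, hGy⟩ := hG
  rw [(hasFDerivAt_kick c hGx hGy).jacobian_eq]
  exact isSymplectic_shearMatrix c a b d

end HasSymmJacobianAt

/-- The step map itself when the effective force vanishes. -/
noncomputable def driftMatrix (h : ℝ) : Matrix (Fin 4) (Fin 4) ℝ :=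
  (1 + h ^ 2)⁻¹ • !![1, h, h, h ^ 2; -h, 1, -h ^ 2, h; -h, -h ^ 2, 1, h; h ^ 2, -h, -h, 1]

theorem isSymplectic_driftMatrix (h : ℝ) : IsSymplectic canonicalJ (driftMatrix h) := by
  have : 1 + h ^ 2 ≠ 0 := by positivity
  ext i j
  rw [transpose_mul_canonicalJ_mul_apply]
  fin_cases i <;> fin_cases j <;> simp [driftMatrix, canonicalJ] <;> field_simp <;> ring

theorem isSymplectic_jacobian_kick_comp_comp_kick {c : ℝ} {Gx Gy : ℝ → ℝ → ℝ}
    {M : Matrix (Fin 4) (Fin 4) ℝ} (hM : IsSymplectic canonicalJ M) {p : Fin 4 → ℝ}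
    (h₁ : HasSymmJacobianAt Gx Gy (p 0, p 1))
    (h₂ : HasSymmJacobianAt Gx Gy ((M *ᵥ kick c Gx Gy p) 0, (M *ᵥ kick c Gx Gy p) 1)) :
    IsSymplectic canonicalJ (jacobian (kick c Gx Gy ∘ (M *ᵥ ·) ∘ kick c Gx Gy) p) := by
  have hM' := hasFDerivAt_mulVec M (kick c Gx Gy p)
  rw [jacobian_comp (g := (M *ᵥ ·) ∘ kick c Gx Gy) (h₂.differentiableAt_kick c)
      (hM'.differentiableAt.comp p (h₁.differentiableAt_kick c)),
    jacobian_comp hM'.differentiableAt (h₁.differentiableAt_kick c), hM'.jacobian_eq]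
  exact (h₂.isSymplectic_jacobian_kick c).mul (hM.mul (h₁.isSymplectic_jacobian_kick c))

theorem trapezoidalStep_eq_kick_comp_drift_comp_kick {h : ℝ} {Ux Uy : ℝ → ℝ → ℝ}
    {stepX stepY stepVx stepVy : ℝ → ℝ → ℝ → ℝ → ℝ}
    (hstepX : ∀ x y vx vy, stepX x y vx vy = (1/(1 + h^2)) * (h * vx + h^2 * vy
      + x * (1 + 3*h^2/2) + (h^3/2) * y - (h^3/2) * Uy x y - (h^2/2) * Ux x y))
    (hstepY : ∀ x y vx vy, stepY x y vx vy = h * vy + h * x - h * stepX x y vx vy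
      + y + (h^2/2) * y - (h^2/2) * Uy x y)
    (hstepVx : ∀ x y vx vy, stepVx x y vx vy = vx - 2 * y + 2 * stepY x y vx vy
      + (h/2) * (stepX x y vx vy + x)
      - (h/2) * Ux (stepX x y vx vy) (stepY x y vx vy) - (h/2) * Ux x y)
    (hstepVy : ∀ x y vx vy, stepVy x y vx vy = vy + 2 * x - 2 * stepX x y vx vy
      + (h/2) * (stepY x y vx vy + y)
      - (h/2) * Uy (stepX x y vx vy) (stepY x y vx vy) - (h/2) * Uy x y)
    {Φ : (Fin 4 → ℝ) → (Fin 4 → ℝ)}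
    (hΦ : ∀ p : Fin 4 → ℝ, Φ p =
      ![stepX (p 0) (p 1) (p 2 + p 1) (p 3 - p 0),
        stepY (p 0) (p 1) (p 2 + p 1) (p 3 - p 0),
        stepVx (p 0) (p 1) (p 2 + p 1) (p 3 - p 0)
          - stepY (p 0) (p 1) (p 2 + p 1) (p 3 - p 0),
        stepVy (p 0) (p 1) (p 2 + p 1) (p 3 - p 0)
          + stepX (p 0) (p 1) (p 2 + p 1) (p 3 - p 0)]) :
    Φ = kick (h / 2) (fun a b => Ux a b - a) (fun a b => Uy a b - b) ∘ (driftMatrix h *ᵥ ·)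
      ∘ kick (h / 2) (fun a b => Ux a b - a) (fun a b => Uy a b - b) := by
  set K := kick (h / 2) (fun a b => Ux a b - a) (fun a b => Uy a b - b)
  have hne : 1 + h ^ 2 ≠ 0 := by positivity
  funext q
  obtain ⟨q', hq'⟩ : ∃ q', driftMatrix h *ᵥ K q = q' := ⟨_, rfl⟩
  have hX : q' 0 = stepX (q 0) (q 1) (q 2 + q 1) (q 3 - q 0) := by
    simp [← hq', K, kick, driftMatrix, hstepX]
    field_simp
    ring
  have hY : q' 1 = stepY (q 0) (q 1) (q 2 + q 1) (q 3 - q 0) := by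
    simp [← hq', K, kick, driftMatrix, hstepY, hstepX]
    field_simp
    ring
  rw [Function.comp_apply, Function.comp_apply, hq', hΦ, hstepVx, hstepVy, ← hX, ← hY]
  simp only [K, kick]
  -- freeze the force at the new position before `q'` is unfolded
  generalize Ux (q' 0) (q' 1) = A
  generalize Uy (q' 0) (q' 1) = B
  subst hq'
  ext i
  fin_cases i <;> simp [K, kick, driftMatrix, mulVec, dotProduct, Fin.sum_univ_four] <;>
    field_simp <;> ring

theorem stmt12_general (μ h : ℝ)
    (r1 r2 Ux Uy : ℝ → ℝ → ℝ)
    (hr1def : ∀ a b, r1 a b = Real.sqrt ((a + μ)^2 + b^2))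
    (hr2def : ∀ a b, r2 a b = Real.sqrt ((a - 1 + μ)^2 + b^2))
    (hUx : ∀ a b, Ux a b =
      (1 - μ) * (a + μ) / (r1 a b)^3 + μ * (a - 1 + μ) / (r2 a b)^3)
    (hUy : ∀ a b, Uy a b =
      (1 - μ) * b / (r1 a b)^3 + μ * b / (r2 a b)^3)
    (stepX stepY stepVx stepVy : ℝ → ℝ → ℝ → ℝ → ℝ)
    (hstepX : ∀ x y vx vy, stepX x y vx vy = (1/(1 + h^2)) * (h * vx + h^2 * vy
      + x * (1 + 3*h^2/2) + (h^3/2) * y - (h^3/2) * Uy x y - (h^2/2) * Ux x y))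
    (hstepY : ∀ x y vx vy, stepY x y vx vy = h * vy + h * x - h * stepX x y vx vy
      + y + (h^2/2) * y - (h^2/2) * Uy x y)
    (hstepVx : ∀ x y vx vy, stepVx x y vx vy = vx - 2 * y + 2 * stepY x y vx vy
      + (h/2) * (stepX x y vx vy + x)
      - (h/2) * Ux (stepX x y vx vy) (stepY x y vx vy) - (h/2) * Ux x y)
    (hstepVy : ∀ x y vx vy, stepVy x y vx vy = vy + 2 * x - 2 * stepX x y vx vy
      + (h/2) * (stepY x y vx vy + y)
      - (h/2) * Uy (stepX x y vx vy) (stepY x y vx vy) - (h/2) * Uy x y)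
    (Φ : (Fin 4 → ℝ) → (Fin 4 → ℝ))
    (hΦ : ∀ p : Fin 4 → ℝ, Φ p =
      ![stepX (p 0) (p 1) (p 2 + p 1) (p 3 - p 0),
        stepY (p 0) (p 1) (p 2 + p 1) (p 3 - p 0),
        stepVx (p 0) (p 1) (p 2 + p 1) (p 3 - p 0)
          - stepY (p 0) (p 1) (p 2 + p 1) (p 3 - p 0),
        stepVy (p 0) (p 1) (p 2 + p 1) (p 3 - p 0)
          + stepX (p 0) (p 1) (p 2 + p 1) (p 3 - p 0)])
    (J : Matrix (Fin 4) (Fin 4) ℝ)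
    (hJ : J = !![0, 0, 1, 0; 0, 0, 0, 1; -1, 0, 0, 0; 0, -1, 0, 0]) :
    ∀ p : Fin 4 → ℝ,
      0 < r1 (p 0) (p 1) → 0 < r2 (p 0) (p 1) →
      0 < r1 (stepX (p 0) (p 1) (p 2 + p 1) (p 3 - p 0))
             (stepY (p 0) (p 1) (p 2 + p 1) (p 3 - p 0)) →
      0 < r2 (stepX (p 0) (p 1) (p 2 + p 1) (p 3 - p 0))
             (stepY (p 0) (p 1) (p 2 + p 1) (p 3 - p 0)) →
      DifferentiableAt ℝ Φ p →
      Matrix.transpose (Matrix.of fun i j : Fin 4 => fderiv ℝ Φ p (Pi.single j 1) i) * J *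
        (Matrix.of fun i j : Fin 4 => fderiv ℝ Φ p (Pi.single j 1) i) = J := by
  intro p h1 h2 h3 h4 _
  set Gx : ℝ → ℝ → ℝ := fun a b => Ux a b - a
  set Gy : ℝ → ℝ → ℝ := fun a b => Uy a b - b
  have hG (a b : ℝ) (ha : 0 < r1 a b) (hb : 0 < r2 a b) : HasSymmJacobianAt Gx Gy (a, b) := by
    rw [hr1def] at ha
    rw [hr2def] at hb
    simpa only [Gx, Gy, hUx, hUy, hr1def, hr2def] using hasSymmJacobianAt_pcrtbp μ ha hb
  have hfactor := trapezoidalStep_eq_kick_comp_drift_comp_kick hstepX hstepY hstepVx hstepVy hΦ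
  have hnext : HasSymmJacobianAt Gx Gy
      ((driftMatrix h *ᵥ kick (h / 2) Gx Gy p) 0, (driftMatrix h *ᵥ kick (h / 2) Gx Gy p) 1) := by
    have hp := congrFun hfactor p
    rw [hΦ] at hp
    convert hG _ _ h3 h4 using 2
    exacts [(congrFun hp 0).symm, (congrFun hp 1).symm]
  rw [hJ, hfactor]
  exact isSymplectic_jacobian_kick_comp_comp_kick (isSymplectic_driftMatrix h) (hG _ _ h1 h2) hnext

/-- The one-step map Φ of the trapezoidal variational integrator for the
PCRTBP (zero control), expressed in canonical coordinates (x, y, p_x, p_y) with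
p_x = ẋ − y, p_y = ẏ + x, is symplectic: wherever it is defined (distances to the
primaries positive at the current and updated step) and differentiable, its Jacobian
matrix satisfies (DΦ)ᵀ J (DΦ) = J for the canonical symplectic matrix J. -/
theorem stmt12 (μ h : ℝ) (hμ : μ ∈ Set.Ioo (0:ℝ) 1) (hh : 0 < h)
    (r1 r2 Ux Uy : ℝ → ℝ → ℝ)
    (hr1def : ∀ a b, r1 a b = Real.sqrt ((a + μ)^2 + b^2))
    (hr2def : ∀ a b, r2 a b = Real.sqrt ((a - 1 + μ)^2 + b^2))
    (hUx : ∀ a b, Ux a b =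
      (1 - μ) * (a + μ) / (r1 a b)^3 + μ * (a - 1 + μ) / (r2 a b)^3)
    (hUy : ∀ a b, Uy a b =
      (1 - μ) * b / (r1 a b)^3 + μ * b / (r2 a b)^3)
    (stepX stepY stepVx stepVy : ℝ → ℝ → ℝ → ℝ → ℝ)
    (hstepX : ∀ x y vx vy, stepX x y vx vy = (1/(1 + h^2)) * (h * vx + h^2 * vy
      + x * (1 + 3*h^2/2) + (h^3/2) * y - (h^3/2) * Uy x y - (h^2/2) * Ux x y))
    (hstepY : ∀ x y vx vy, stepY x y vx vy = h * vy + h * x - h * stepX x y vx vy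
      + y + (h^2/2) * y - (h^2/2) * Uy x y)
    (hstepVx : ∀ x y vx vy, stepVx x y vx vy = vx - 2 * y + 2 * stepY x y vx vy
      + (h/2) * (stepX x y vx vy + x)
      - (h/2) * Ux (stepX x y vx vy) (stepY x y vx vy) - (h/2) * Ux x y)
    (hstepVy : ∀ x y vx vy, stepVy x y vx vy = vy + 2 * x - 2 * stepX x y vx vy
      + (h/2) * (stepY x y vx vy + y)
      - (h/2) * Uy (stepX x y vx vy) (stepY x y vx vy) - (h/2) * Uy x y)
    (Φ : (Fin 4 → ℝ) → (Fin 4 → ℝ))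
    (hΦ : ∀ p : Fin 4 → ℝ, Φ p =
      ![stepX (p 0) (p 1) (p 2 + p 1) (p 3 - p 0),
        stepY (p 0) (p 1) (p 2 + p 1) (p 3 - p 0),
        stepVx (p 0) (p 1) (p 2 + p 1) (p 3 - p 0)
          - stepY (p 0) (p 1) (p 2 + p 1) (p 3 - p 0),
        stepVy (p 0) (p 1) (p 2 + p 1) (p 3 - p 0)
          + stepX (p 0) (p 1) (p 2 + p 1) (p 3 - p 0)])
    (J : Matrix (Fin 4) (Fin 4) ℝ)
    (hJ : J = !![0, 0, 1, 0; 0, 0, 0, 1; -1, 0, 0, 0; 0, -1, 0, 0]) :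
    ∀ p : Fin 4 → ℝ,
      0 < r1 (p 0) (p 1) → 0 < r2 (p 0) (p 1) →
      0 < r1 (stepX (p 0) (p 1) (p 2 + p 1) (p 3 - p 0))
             (stepY (p 0) (p 1) (p 2 + p 1) (p 3 - p 0)) →
      0 < r2 (stepX (p 0) (p 1) (p 2 + p 1) (p 3 - p 0))
             (stepY (p 0) (p 1) (p 2 + p 1) (p 3 - p 0)) →
      DifferentiableAt ℝ Φ p →
      Matrix.transpose (Matrix.of fun i j : Fin 4 => fderiv ℝ Φ p (Pi.single j 1) i) * J *
        (Matrix.of fun i j : Fin 4 => fderiv ℝ Φ p (Pi.single j 1) i) = J :=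
  stmt12_general μ h r1 r2 Ux Uy hr1def hr2def hUx hUy stepX stepY stepVx stepVy hstepX hstepY
    hstepVx hstepVy Φ hΦ J hJ
end

section
/- Let N ≥ 1, let f : ℝ⁴ × ℝ² → ℝ⁴, φ : ℝ⁴ → ℝ, and m : ℝ⁴ → ℝ² be continuously differentiable, and fix x₀ ∈ ℝ⁴. Suppose (x₁*, …, x_N*, u₀*, …, u_{N−1}*) is a local minimizer of φ(x_N) over all sequences satisfying the discrete dynamics x_{k+1} = f(x_k, u_k) for k = 0, …, N−1 and the terminal constraint m(x_N) = 0, and suppose the derivative at the minimizer of the total constraint map (x₁, …, x_N, u₀, …, u_{N−1}) ↦ ((x_{k+1} − f(x_k, u_k))_{k=0}^{N−1}, m(x_N)) is surjective. Then there exist costates λ₁, …, λ_N ∈ ℝ⁴ and a multiplier β ∈ ℝ² such that: (i) λ_k = (∂f/∂x (x_k*, u_k*))ᵀ λ_{k+1} for k = 1, …, N−1 (the discrete costate equation); (ii) (∂f/∂u (x_k*, u_k*))ᵀ λ_{k+1} = 0 for k = 0, …, N−1 (stationarity of the Hamiltonian H_k = λ_{k+1}ᵀ f(x_k, u_k) in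 the control); and (iii) λ_N = ∇φ(x_N*) + (Dm(x_N*))ᵀ β (the transversality condition). -/
/-!
Treat the states `x₁, …, x_N` and the controls `u₀, …, u_{N-1}` as independent unknowns `z`.
The optimal `z` is a local minimiser of `φ(x_N)` on the level set `G z = 0` of the constraint map
`G z = ((x_{k+1} - f(x_k, u_k))_k, m(x_N))`, and since `DG` is onto, the Lagrange multiplier rule
is normal: some functional `μ` satisfies `μ ∘ DG = Dφ(x_N) ∘ (z ↦ x_N)`. The costate `λ_k` is the
part of `μ` pairing with the dynamics equation that defines `x_k`, and `-β` is the part pairing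
with `m`. Testing `μ ∘ DG = Dφ` on a perturbation of the single state `x_k` gives the costate
equation (`k < N`) or the transversality condition (`k = N`); testing it on a perturbation of the
single control `u_k` gives the stationarity of the Hamiltonian.
-/

open Function

theorem IsLocalExtrOn.exists_dual_of_surjective
    {E F : Type*} [NormedAddCommGroup E] [NormedSpace ℝ E] [CompleteSpace E]
    [NormedAddCommGroup F] [NormedSpace ℝ F] [CompleteSpace F]
    {g : E → F} {φ : E → ℝ} {z₀ : E} {g' : E →L[ℝ] F} {φ' : StrongDual ℝ E}
    (hextr : IsLocalExtrOn φ {z | g z = g z₀} z₀) (hg : HasStrictFDerivAt g g' z₀)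
    (hφ : HasStrictFDerivAt φ φ' z₀) (hsurj : Surjective g') :
    ∃ μ : Module.Dual ℝ F, ∀ v, μ (g' v) = φ' v := by
  obtain ⟨Λ, Λ₀, hne, hΛ⟩ := hextr.exists_linear_map_of_hasStrictFDerivAt hg hφ
  have hΛ₀ : Λ₀ ≠ 0 := by
    rintro rfl
    refine hne (Prod.ext (LinearMap.ext fun w => ?_) rfl)
    obtain ⟨v, rfl⟩ := hsurj w
    simpa using hΛ v
  refine ⟨-Λ₀⁻¹ • Λ, fun v => ?_⟩
  have h := hΛ v
  rw [smul_eq_mul] at h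
  simp only [LinearMap.smul_apply, smul_eq_mul]
  field_simp
  linarith

theorem Module.Dual.apply_eq_sum_single {R ι : Type*} [CommSemiring R] [Fintype ι]
    [DecidableEq ι] (ℓ : Module.Dual R (ι → R)) (w : ι → R) :
    ℓ w = ∑ j, ℓ (Pi.single j 1) * w j := by
  conv_lhs => rw [pi_eq_sum_univ' w]
  simp [map_sum, mul_comm]

theorem apply_single_eq_single_succ {V W : Type*} [Zero V] [Zero W] (F : ℕ → V → W)
    (hF : ∀ j, F j 0 = 0) (k j : ℕ) (w : V) :
    F j ((Pi.single k w : ℕ → V) j) = (Pi.single (k + 1) (F k w) : ℕ → W) (j + 1) := by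
  rcases eq_or_ne j k with rfl | h
  · simp
  · simp [h, hF]

section PartialDeriv

variable {X U Z : Type*} [NormedAddCommGroup X] [NormedSpace ℝ X] [NormedAddCommGroup U]
  [NormedSpace ℝ U] [NormedAddCommGroup Z] [NormedSpace ℝ Z] {f : X → U → Z}
  {D : X × U →L[ℝ] Z} {x : X} {u : U}

theorem HasFDerivAt.fderiv_partial_left (h : HasFDerivAt (fun p : X × U => f p.1 p.2) D (x, u))
    (w : X) : fderiv ℝ (fun ξ => f ξ u) x w = D (w, 0) := by
  have h' := h.comp x (hasFDerivAt_prodMk_left (𝕜 := ℝ) x u)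
  exact DFunLike.congr_fun h'.fderiv w

theorem HasFDerivAt.fderiv_partial_right (h : HasFDerivAt (fun p : X × U => f p.1 p.2) D (x, u))
    (v : U) : fderiv ℝ (fun η => f x η) u v = D (0, v) :=
  DFunLike.congr_fun (h.comp u (hasFDerivAt_prodMk_right x u)).fderiv v

end PartialDeriv

namespace DiscreteControl

variable {X U Y : Type*} {N : ℕ}

def prevState (x0 : X) (xs : Fin N → X) (k : Fin N) : X :=
  if (k : ℕ) = 0 then x0 else xs ⟨(k : ℕ) - 1, (Nat.sub_le _ _).trans_lt k.isLt⟩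

def lastState (hN : 1 ≤ N) (xs : Fin N → X) : X := xs ⟨N - 1, Nat.sub_lt hN Nat.one_pos⟩

def constraintMap [Sub X] (f : X → U → X) (m : X → Y) (x0 : X) (hN : 1 ≤ N)
    (z : (Fin N → X) × (Fin N → U)) : (Fin N → X) × Y :=
  (fun k => z.1 k - f (prevState x0 z.1 k) (z.2 k), m (lastState hN z.1))

/-- The unknowns `x₁, …, x_N` of a state sequence: `x_k` sits at index `k - 1` and `x₀` is
dropped. -/
def finStates (a : ℕ → X) : Fin N → X := fun k => a ((k : ℕ) + 1)

def finControls (b : ℕ → U) : Fin N → U := fun k => b k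

def ofFinStates [Zero X] (x0 : X) (xs : Fin N → X) : ℕ → X
  | 0 => x0
  | k + 1 => if h : k < N then xs ⟨k, h⟩ else 0

def ofFinControls [Zero U] (us : Fin N → U) (k : ℕ) : U :=
  if h : k < N then us ⟨k, h⟩ else 0

@[simp]
theorem finStates_ofFinStates [Zero X] (x0 : X) (xs : Fin N → X) :
    finStates (ofFinStates x0 xs) = xs := by
  ext k : 1
  simp [finStates, ofFinStates]

@[simp]
theorem finControls_ofFinControls [Zero U] (us : Fin N → U) :
    finControls (ofFinControls us) = us := by
  ext k : 1
  simp [finControls, ofFinControls]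

theorem prevState_finStates {x0 : X} {a : ℕ → X} (ha : a 0 = x0) (k : Fin N) :
    prevState x0 (finStates a) k = a k := by
  unfold prevState finStates
  split_ifs with hk
  · rw [hk, ha]
  · congr 1
    dsimp only
    omega

theorem lastState_finStates (hN : 1 ≤ N) (a : ℕ → X) : lastState hN (finStates a) = a N := by
  unfold lastState finStates
  congr 1
  dsimp only
  omega

theorem constraintMap_finStates [Sub X] (f : X → U → X) (m : X → Y) {x0 : X} (hN : 1 ≤ N)
    {a : ℕ → X} (ha : a 0 = x0) (b : ℕ → U) :
    constraintMap f m x0 hN (finStates a, finControls b) =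
      (fun k : Fin N => a (k + 1) - f (a k) (b k), m (a N)) := by
  simp only [constraintMap, prevState_finStates ha, lastState_finStates]
  rfl

variable [NormedAddCommGroup X] [NormedAddCommGroup U] [NormedAddCommGroup Y]

theorem isLocalMinOn_constraintMap (f : X → U → X) (φ : X → ℝ) (m : X → Y) (hN : 1 ≤ N)
    {x0 : X} {x : ℕ → X} {u : ℕ → U} (hx0 : x 0 = x0)
    (hdyn : ∀ k < N, x (k + 1) = f (x k) (u k)) (hterm : m (x N) = 0)
    (hmin : ∃ δ > 0, ∀ (x' : ℕ → X) (u' : ℕ → U),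
      x' 0 = x0 → (∀ k < N, x' (k + 1) = f (x' k) (u' k)) → m (x' N) = 0 →
      (∀ k ≤ N, ‖x' k - x k‖ < δ) → (∀ k < N, ‖u' k - u k‖ < δ) →
      φ (x N) ≤ φ (x' N)) :
    IsLocalMinOn (fun z => φ (lastState hN z.1))
      {z | constraintMap f m x0 hN z = constraintMap f m x0 hN (finStates x, finControls u)}
      (finStates x, finControls u) := by
  obtain ⟨δ, hδ, hmin⟩ := hmin
  have hG : constraintMap f m x0 hN (finStates x, finControls u) = 0 := by
    rw [constraintMap_finStates f m hN hx0, hterm]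
    refine Prod.ext (funext fun k => ?_) rfl
    simp [hdyn k k.isLt]
  filter_upwards [self_mem_nhdsWithin, mem_nhdsWithin_of_mem_nhds (Metric.ball_mem_nhds _ hδ)]
    with z hGz hz
  set x' := ofFinStates x0 z.1
  set u' := ofFinControls z.2
  have hz' : z = (finStates x', finControls u') := by simp [x', u']
  rw [hG, hz', constraintMap_finStates f m hN (show x' 0 = x0 from rfl)] at hGz
  rw [Metric.mem_ball, hz', dist_eq_norm] at hz
  set d := (finStates x', finControls u') - (finStates x, finControls u)
  have hdyn' : ∀ k < N, x' (k + 1) = f (x' k) (u' k) := fun k hk =>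
    sub_eq_zero.mp (congrFun (congrArg Prod.fst hGz) ⟨k, hk⟩)
  have hclose (k : Fin N) : ‖x' (k + 1) - x (k + 1)‖ < δ ∧ ‖u' k - u k‖ < δ :=
    ⟨((norm_le_pi_norm _ k).trans (norm_fst_le d)).trans_lt hz,
      ((norm_le_pi_norm _ k).trans (norm_snd_le d)).trans_lt hz⟩
  rw [hz']
  simp only [lastState_finStates]
  refine hmin x' u' rfl hdyn' (congrArg Prod.snd hGz) (fun k hk => ?_)
    (fun k hk => (hclose ⟨k, hk⟩).2)
  rcases k with _ | k
  · simpa [x', ofFinStates, hx0] using hδ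
  · exact (hclose ⟨k, hk⟩).1

variable [NormedSpace ℝ X] [NormedSpace ℝ U] [NormedSpace ℝ Y]

def prevStateL (k : Fin N) : (Fin N → X) →L[ℝ] X :=
  if (k : ℕ) = 0 then 0
  else ContinuousLinearMap.proj ⟨(k : ℕ) - 1, (Nat.sub_le _ _).trans_lt k.isLt⟩

theorem prevStateL_apply (k : Fin N) (xs : Fin N → X) : prevStateL k xs = prevState 0 xs k := by
  unfold prevStateL prevState
  split_ifs <;> rfl

theorem hasStrictFDerivAt_prevState (x0 : X) (k : Fin N) (xs : Fin N → X) :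
    HasStrictFDerivAt (fun xs => prevState x0 xs k) (prevStateL k) xs := by
  unfold prevState prevStateL
  split_ifs
  exacts [hasStrictFDerivAt_const _ _, hasStrictFDerivAt_apply _ _]

def lastStateL (hN : 1 ≤ N) : (Fin N → X) →L[ℝ] X :=
  ContinuousLinearMap.proj ⟨N - 1, Nat.sub_lt hN Nat.one_pos⟩

theorem hasStrictFDerivAt_lastState (hN : 1 ≤ N) (xs : Fin N → X) :
    HasStrictFDerivAt (lastState hN) (lastStateL hN) xs :=
  hasStrictFDerivAt_apply _ _

def constraintDeriv (Df : ℕ → X × U →L[ℝ] X) (Dm : X →L[ℝ] Y) (hN : 1 ≤ N) :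
    (Fin N → X) × (Fin N → U) →L[ℝ] (Fin N → X) × Y :=
  (ContinuousLinearMap.pi fun k : Fin N =>
      .proj k ∘L .fst ℝ _ _ -
        Df k ∘L ((prevStateL k ∘L .fst ℝ _ _).prod (.proj k ∘L .snd ℝ _ _))).prod
    (Dm ∘L lastStateL hN ∘L .fst ℝ _ _)

theorem constraintDeriv_apply (Df : ℕ → X × U →L[ℝ] X) (Dm : X →L[ℝ] Y) (hN : 1 ≤ N)
    (z : (Fin N → X) × (Fin N → U)) :
    constraintDeriv Df Dm hN z =
      (fun k => z.1 k - Df k (prevState 0 z.1 k, z.2 k), Dm (lastState hN z.1)) := by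
  simp_rw [← prevStateL_apply]
  rfl

theorem hasStrictFDerivAt_constraintMap {f : X → U → X} {m : X → Y} {x0 : X} (hN : 1 ≤ N)
    {Df : ℕ → X × U →L[ℝ] X} {Dm : X →L[ℝ] Y} {z : (Fin N → X) × (Fin N → U)}
    (hf : ∀ k : Fin N,
      HasStrictFDerivAt (fun p : X × U => f p.1 p.2) (Df k) (prevState x0 z.1 k, z.2 k))
    (hm : HasStrictFDerivAt m Dm (lastState hN z.1)) :
    HasStrictFDerivAt (constraintMap f m x0 hN) (constraintDeriv Df Dm hN) z := by
  refine .prodMk (hasStrictFDerivAt_pi'' fun k => ?_)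
    (hm.comp z ((hasStrictFDerivAt_lastState hN z.1).comp z hasStrictFDerivAt_fst))
  rw [ContinuousLinearMap.proj_pi]
  have hprev := (hasStrictFDerivAt_prevState x0 k z.1).comp z (hasStrictFDerivAt_fst (p := z))
  exact (ContinuousLinearMap.proj k ∘L .fst ℝ _ _).hasStrictFDerivAt.sub
    ((hf k).comp z (hprev.prodMk (ContinuousLinearMap.proj k ∘L .snd ℝ _ _).hasStrictFDerivAt))

theorem constraintDeriv_finStates (Df : ℕ → X × U →L[ℝ] X) (Dm : X →L[ℝ] Y) (hN : 1 ≤ N)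
    {a : ℕ → X} (ha : a 0 = 0) (b : ℕ → U) :
    constraintDeriv Df Dm hN (finStates a, finControls b) =
      (fun k : Fin N => a (k + 1) - Df k (a k, b k), Dm (a N)) := by
  rw [constraintDeriv_apply]
  simp only [prevState_finStates ha, lastState_finStates]
  rfl

/-- `costate μ k w` is `μ` evaluated on the perturbation `δx_k = w` of the single state `x_k`; it
vanishes unless `1 ≤ k ≤ N`. -/
def costate (μ : Module.Dual ℝ ((Fin N → X) × Y)) (k : ℕ) : Module.Dual ℝ X :=
  μ ∘ₗ LinearMap.inl ℝ _ Y ∘ₗ LinearMap.funLeft ℝ X (fun j : Fin N => (j : ℕ) + 1) ∘ₗ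
    LinearMap.single ℝ (fun _ : ℕ => X) k

theorem costate_apply (μ : Module.Dual ℝ ((Fin N → X) × Y)) (k : ℕ) (w : X) :
    costate μ k w = μ (finStates (Pi.single k w), 0) :=
  rfl

theorem costate_eq_zero_of_lt (μ : Module.Dual ℝ ((Fin N → X) × Y)) {k : ℕ} (hk : N < k) :
    costate μ k = 0 := by
  ext w
  have : finStates (N := N) (Pi.single k w) = 0 := by
    ext j : 1
    have hj : (j : ℕ) + 1 ≠ k := by omega
    exact Pi.single_eq_of_ne (M := fun _ => X) hj w
  simp [costate_apply, this, Prod.mk_zero_zero]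

section Multiplier

variable {μ : Module.Dual ℝ ((Fin N → X) × Y)} {Df : ℕ → X × U →L[ℝ] X} {Dm : X →L[ℝ] Y}
  {Dφ : X →L[ℝ] ℝ} {hN : 1 ≤ N}

theorem costate_sub_costate_succ
    (hμ : ∀ z, μ (constraintDeriv Df Dm hN z) = Dφ (lastState hN z.1)) {k : ℕ} (hk : 1 ≤ k)
    (w : X) :
    costate μ k w - costate μ (k + 1) (Df k (w, 0)) + μ (0, Dm ((Pi.single k w : ℕ → X) N)) =
      Dφ ((Pi.single k w : ℕ → X) N) := by
  have h := hμ (finStates (Pi.single k w), finControls 0)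
  rw [constraintDeriv_finStates Df Dm hN (Pi.single_eq_of_ne (by omega) w)] at h
  have hsplit : (fun j : Fin N => (Pi.single k w : ℕ → X) (j + 1) -
        Df j ((Pi.single k w : ℕ → X) j, (0 : ℕ → U) j), Dm ((Pi.single k w : ℕ → X) N)) =
      (finStates (Pi.single k w), 0) - (finStates (Pi.single (k + 1) (Df k (w, 0))), 0) +
        (0, Dm ((Pi.single k w : ℕ → X) N)) := by
    refine Prod.ext (funext fun j => ?_) (by simp)
    simpa [finStates] using
      apply_single_eq_single_succ (fun j w => Df j (w, 0)) (fun j => map_zero (Df j)) k j w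
  rw [hsplit, map_add, map_sub] at h
  simpa [costate_apply, lastState_finStates] using h

theorem costate_succ_apply_control
    (hμ : ∀ z, μ (constraintDeriv Df Dm hN z) = Dφ (lastState hN z.1)) (k : ℕ) (v : U) :
    costate μ (k + 1) (Df k (0, v)) = 0 := by
  have h := hμ (finStates 0, finControls (Pi.single k v))
  rw [constraintDeriv_finStates Df Dm hN rfl] at h
  have hsplit : (fun j : Fin N => (0 : ℕ → X) (j + 1) - Df j ((0 : ℕ → X) j,
        (Pi.single k v : ℕ → U) j),
      Dm ((0 : ℕ → X) N)) = -(finStates (Pi.single (k + 1) (Df k (0, v))), 0) := by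
    refine Prod.ext (funext fun j => ?_) (by simp)
    simpa [finStates] using
      apply_single_eq_single_succ (fun j v => Df j (0, v)) (fun j => map_zero (Df j)) k j v
  rw [hsplit, map_neg] at h
  simpa [costate_apply, lastState_finStates] using h

end Multiplier

theorem exists_costate_of_isLocalMin [CompleteSpace X] [CompleteSpace U] [CompleteSpace Y]
    {f : X → U → X} {φ : X → ℝ} {m : X → Y} (hN : 1 ≤ N)
    (hf : ContDiff ℝ 1 (fun p : X × U => f p.1 p.2)) (hφ : ContDiff ℝ 1 φ) (hm : ContDiff ℝ 1 m)
    {x0 : X} {x : ℕ → X} {u : ℕ → U} (hx0 : x 0 = x0)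
    (hdyn : ∀ k < N, x (k + 1) = f (x k) (u k)) (hterm : m (x N) = 0)
    (hmin : ∃ δ > 0, ∀ (x' : ℕ → X) (u' : ℕ → U),
      x' 0 = x0 → (∀ k < N, x' (k + 1) = f (x' k) (u' k)) → m (x' N) = 0 →
      (∀ k ≤ N, ‖x' k - x k‖ < δ) → (∀ k < N, ‖u' k - u k‖ < δ) →
      φ (x N) ≤ φ (x' N))
    (hsurj : Surjective (fderiv ℝ (constraintMap f m x0 hN) (finStates x, finControls u))) :
    ∃ (Λ : ℕ → Module.Dual ℝ X) (β : Module.Dual ℝ Y),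
      (∀ k, 1 ≤ k → k ≤ N - 1 → ∀ w,
        Λ k w = Λ (k + 1) (fderiv ℝ (fun ξ => f ξ (u k)) (x k) w)) ∧
      (∀ k < N, ∀ v, Λ (k + 1) (fderiv ℝ (fun η => f (x k) η) (u k) v) = 0) ∧
      (∀ w, Λ N w = fderiv ℝ φ (x N) w + β (fderiv ℝ m (x N) w)) := by
  set Df : ℕ → X × U →L[ℝ] X := fun k => fderiv ℝ (fun p : X × U => f p.1 p.2) (x k, u k)
  have hDf (k : ℕ) : HasStrictFDerivAt (fun p : X × U => f p.1 p.2) (Df k) (x k, u k) :=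
    hf.contDiffAt.hasStrictFDerivAt one_ne_zero
  have hxN : lastState hN (finStates x) = x N := lastState_finStates hN x
  have hG : HasStrictFDerivAt (constraintMap f m x0 hN)
      (constraintDeriv Df (fderiv ℝ m (x N)) hN) (finStates x, finControls u) :=
    hasStrictFDerivAt_constraintMap hN (fun k => by rw [prevState_finStates hx0]; exact hDf k)
      (by rw [hxN]; exact hm.contDiffAt.hasStrictFDerivAt one_ne_zero)
  have hΦ : HasStrictFDerivAt (fun z : (Fin N → X) × (Fin N → U) => φ (lastState hN z.1))
      (fderiv ℝ φ (x N) ∘L lastStateL hN ∘L .fst ℝ _ _) (finStates x, finControls u) := by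
    refine .comp _ ?_ ((hasStrictFDerivAt_lastState hN _).comp _ hasStrictFDerivAt_fst)
    rw [hxN]
    exact hφ.contDiffAt.hasStrictFDerivAt one_ne_zero
  obtain ⟨μ, hμ⟩ := IsLocalExtrOn.exists_dual_of_surjective
    (IsMinFilter.isExtr (isLocalMinOn_constraintMap f φ m hN hx0 hdyn hterm hmin)) hG hΦ
    (hG.hasFDerivAt.fderiv ▸ hsurj)
  refine ⟨costate μ, -(μ ∘ₗ LinearMap.inr ℝ _ Y), fun k hk1 hk2 w => ?_, fun k _ v => ?_,
    fun w => ?_⟩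
  · have h := costate_sub_costate_succ hμ hk1 w
    rw [Pi.single_eq_of_ne (by omega)] at h
    rw [(hDf k).hasFDerivAt.fderiv_partial_left]
    simpa [Prod.mk_zero_zero, sub_eq_zero] using h
  · rw [(hDf k).hasFDerivAt.fderiv_partial_right]
    exact costate_succ_apply_control hμ k v
  · have h := costate_sub_costate_succ hμ hN w
    rw [Pi.single_eq_same, costate_eq_zero_of_lt μ (Nat.lt_succ_self N), LinearMap.zero_apply,
      sub_zero] at h
    simp only [LinearMap.neg_apply, LinearMap.comp_apply, LinearMap.inr_apply]
    linarith

end DiscreteControl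

/-- First-order necessary conditions (discrete Pontryagin / Lagrange
multiplier rule) for the discrete optimal control problem: minimize φ(x_N) subject to
x_{k+1} = f(x_k, u_k), k = 0,…,N−1, and m(x_N) = 0, with x₀ fixed. Under a constraint
qualification (surjectivity of the derivative of the total constraint map at the local
minimizer), there exist costates λ₁,…,λ_N and a multiplier β satisfying the discrete
costate equation, stationarity of the Hamiltonian in the control, and the
transversality condition. -/
theorem stmt16 (N : ℕ) (hN : 1 ≤ N)
    (f : (Fin 4 → ℝ) → (Fin 2 → ℝ) → (Fin 4 → ℝ))
    (φ : (Fin 4 → ℝ) → ℝ) (m : (Fin 4 → ℝ) → (Fin 2 → ℝ))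
    (hf : ContDiff ℝ 1 (fun p : (Fin 4 → ℝ) × (Fin 2 → ℝ) => f p.1 p.2))
    (hφ : ContDiff ℝ 1 φ) (hm : ContDiff ℝ 1 m)
    (x0 : Fin 4 → ℝ)
    (x : ℕ → (Fin 4 → ℝ)) (u : ℕ → (Fin 2 → ℝ))
    (hx0 : x 0 = x0)
    (hdyn : ∀ k < N, x (k + 1) = f (x k) (u k))
    (hterm : m (x N) = 0)
    (hmin : ∃ δ > 0, ∀ (x' : ℕ → (Fin 4 → ℝ)) (u' : ℕ → (Fin 2 → ℝ)),
      x' 0 = x0 → (∀ k < N, x' (k + 1) = f (x' k) (u' k)) → m (x' N) = 0 →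
      (∀ k ≤ N, ‖x' k - x k‖ < δ) → (∀ k < N, ‖u' k - u k‖ < δ) →
      φ (x N) ≤ φ (x' N))
    (hsurj : Function.Surjective
      (fderiv ℝ
        (fun z : (Fin N → (Fin 4 → ℝ)) × (Fin N → (Fin 2 → ℝ)) =>
          ((fun k : Fin N =>
              z.1 k - f (if hk : (k : ℕ) = 0 then x0
                         else z.1 ⟨(k : ℕ) - 1, by have := k.isLt; omega⟩) (z.2 k)),
           m (z.1 ⟨N - 1, by omega⟩)))
        ((fun k : Fin N => x ((k : ℕ) + 1)), (fun k : Fin N => u (k : ℕ))))) :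
    ∃ (lam : ℕ → (Fin 4 → ℝ)) (β : Fin 2 → ℝ),
      (∀ k, 1 ≤ k → k ≤ N - 1 → ∀ i : Fin 4,
        lam k i = ∑ j : Fin 4,
          lam (k + 1) j * fderiv ℝ (fun ξ => f ξ (u k)) (x k) (Pi.single i 1) j) ∧
      (∀ k < N, ∀ i : Fin 2,
        ∑ j : Fin 4,
          lam (k + 1) j * fderiv ℝ (fun v => f (x k) v) (u k) (Pi.single i 1) j = 0) ∧
      (∀ i : Fin 4,
        lam N i = fderiv ℝ φ (x N) (Pi.single i 1)
          + ∑ j : Fin 2, β j * fderiv ℝ m (x N) (Pi.single i 1) j) := by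
  obtain ⟨Λ, β, hcostate, hstat, htrans⟩ :=
    DiscreteControl.exists_costate_of_isLocalMin hN hf hφ hm hx0 hdyn hterm hmin hsurj
  refine ⟨fun k i => Λ k (Pi.single i 1), fun j => β (Pi.single j 1), fun k hk1 hk2 i => ?_,
    fun k hk i => ?_, fun i => ?_⟩
  · exact (hcostate k hk1 hk2 _).trans (Module.Dual.apply_eq_sum_single _ _)
  · rw [← Module.Dual.apply_eq_sum_single]
    exact hstat k hk _
  · exact (htrans _).trans (congrArg _ (Module.Dual.apply_eq_sum_single β _))
end
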